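/- Every strong semicomplete composition Q = T[H_1, …, H_t] with at least six vertices has at least five 4-kings. Furthermore, if Q has no 3-king, then Q has at least eight 4-kings. -/

import Mathlib

universe u v

/-- There is a directed walk of length at most `n` from `x` to `y`. -/
def ReachIn {V : Type u} (A : V → V → Prop) : ℕ → V → V → Prop
  | 0 => fun x y => x = y
  | n + 1 => fun x y => x = y ∨ ∃ z, A x z ∧ ReachIn A n z y

/-- A digraph is strong if every vertex can reach every other vertex. -/
def IsStrong {V : Type u} (A : V → V → Prop) : Prop :=
  ∀ x y : V, Relation.ReflTransGen A x y

/-- A digraph is loopless if it has no loops. -/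
def Loopless {V : Type u} (A : V → V → Prop) : Prop := ∀ x, ¬ A x x

/-- A digraph is semicomplete if there is at least one arc between any two distinct vertices. -/
def Semicomplete {V : Type u} (A : V → V → Prop) : Prop :=
  ∀ x y : V, x ≠ y → A x y ∨ A y x

/-- The subdigraph induced on a set `s` of vertices. -/
def Restrict {V : Type u} (A : V → V → Prop) (s : Set V) :
    {v // v ∈ s} → {v // v ∈ s} → Prop := fun x y => A x.1 y.1

/-- `S` is a separator: deleting `S` leaves a non-strong digraph. -/
def IsSeparator {V : Type u} (A : V → V → Prop) (S : Set V) : Prop :=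
  ¬ IsStrong (Restrict A Sᶜ)

/-- A digraph is `k`-strong-connected if every separator has at least `k` vertices. -/
def KStrong {V : Type u} (A : V → V → Prop) (k : ℕ) : Prop :=
  ∀ S : Set V, IsSeparator A S → k ≤ S.ncard

/-- The composition `T[H₁, …, H_t]`. -/
def Comp {t : ℕ} (T : Fin t → Fin t → Prop) (V : Fin t → Type u)
    (H : ∀ i, V i → V i → Prop) : (Σ i, V i) → (Σ i, V i) → Prop :=
  fun p q => T p.1 q.1 ∨ ∃ h : p.1 = q.1, H q.1 (h ▸ p.2) q.2

/-- The complement of the underlying (simple) graph of a digraph. -/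
def complUnderlying {V : Type u} (A : V → V → Prop) : SimpleGraph V where
  Adj x y := x ≠ y ∧ ¬ A x y ∧ ¬ A y x
  symm := ⟨fun x y ⟨h1, h2, h3⟩ => ⟨h1.symm, h3, h2⟩⟩
  loopless := ⟨fun x h => h.1 rfl⟩

/-- `x` is a `k`-king: it reaches every vertex by a path of length at most `k`. -/
def IsKKing {V : Type u} (A : V → V → Prop) (k : ℕ) (x : V) : Prop :=
  ∀ y, ReachIn A k x y

/-- A (directed) path given as a list of vertices. -/
def IsPathList {V : Type u} (A : V → V → Prop) (l : List V) : Prop :=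
  l.Nodup ∧ l.Chain' A

/-- A (directed) cycle given as a list of distinct vertices. -/
def IsCycleList {V : Type u} (A : V → V → Prop) (l : List V) : Prop :=
  2 ≤ l.length ∧ l.Nodup ∧ l.Chain' A ∧
    ∀ x ∈ l.getLast?, ∀ y ∈ l.head?, A x y

/-!
In a strong semicomplete digraph on at least two vertices, every vertex `v` has a 2-king among
its in-neighbours (a 2-king of the subdigraph they induce is, through `v`, a 2-king of the whole
digraph), and every vertex lies on a closed walk of length at most 3. Hence every vertex of `Q`
in the part of a 2-king of `T` is a 3-king of `Q`, and the second claim is vacuous.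

For the first claim, `T` has at least `min 5 t` 4-kings. There are at least two 2-kings, and
while the `m`-kings are not all vertices, the tail of an arc entering them from outside is a new
`(m + 1)`-king. If the 2-kings are exactly `a ⇄ b`, a vertex `x → a` outside them is not a 2-king,
so it has in-neighbours outside `{a, b}`; a 2-king of these reaches `a` and `b` through `x` and is
a fourth 3-king. Every `m`-king of `T` with `m ≥ 3` lifts to all vertices of its part, so either
every vertex of `Q` is a 4-king or `T` already has five of them.
-/

namespace ReachIn

variable {V : Type u} {A : V → V → Prop} {n : ℕ} {x y z : V}

theorem refl : ∀ (n : ℕ) (x : V), ReachIn A n x x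
  | 0, _ => rfl
  | _ + 1, _ => Or.inl rfl

theorem cons (h : A x z) (hr : ReachIn A n z y) : ReachIn A (n + 1) x y :=
  Or.inr ⟨z, h, hr⟩

theorem of_adj (h : A x y) : ReachIn A (n + 1) x y :=
  cons h (refl n y)

theorem succ : ∀ {n : ℕ} {x y : V}, ReachIn A n x y → ReachIn A (n + 1) x y
  | 0, _, _, rfl => refl 1 _
  | _ + 1, _, _, h => h.imp_right fun ⟨z, hz, hr⟩ => ⟨z, hz, succ hr⟩

theorem mono {m : ℕ} (hmn : m ≤ n) (h : ReachIn A m x y) : ReachIn A n x y :=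
  Nat.le_induction h (fun _ _ => succ) n hmn

end ReachIn

section Kings

variable {V : Type u} {A : V → V → Prop}

def kingSet (A : V → V → Prop) (m : ℕ) : Set V := {x | IsKKing A m x}

theorem IsKKing.mono {m n : ℕ} (hmn : m ≤ n) {x : V} (hx : IsKKing A m x) : IsKKing A n x :=
  fun y => (hx y).mono hmn

theorem IsKKing.of_adj {m : ℕ} {w z : V} (hwz : A w z) (hz : IsKKing A m z) :
    IsKKing A (m + 1) w :=
  fun y => ReachIn.cons hwz (hz y)

theorem kingSet_mono {m n : ℕ} (hmn : m ≤ n) : kingSet A m ⊆ kingSet A n :=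
  fun _ hx => IsKKing.mono hmn hx

theorem IsStrong.exists_adj_into (hstr : IsStrong A) {s : Set V} {x y : V} (hx : x ∉ s)
    (hy : y ∈ s) : ∃ w ∉ s, ∃ z ∈ s, A w z := by
  induction hstr x y using Relation.ReflTransGen.head_induction_on with
  | refl => exact absurd hy hx
  | @head a b hab _ ih =>
    by_cases hb : b ∈ s
    · exact ⟨a, hx, b, hb, hab⟩
    · exact ih hb

theorem IsStrong.exists_adj_to [Finite V] (hstr : IsStrong A) (hV : 1 < Nat.card V) (v : V) :
    ∃ w, A w v := by
  have := Finite.one_lt_card_iff_nontrivial.mp hV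
  obtain ⟨u, hu⟩ := exists_ne v
  obtain ⟨w, -, z, rfl, hwz⟩ := hstr.exists_adj_into (s := {v}) hu rfl
  exact ⟨w, hwz⟩

theorem min_card_le_ncard_kingSet_succ [Finite V] (hstr : IsStrong A) {m : ℕ}
    (hne : (kingSet A m).Nonempty) :
    min (Nat.card V) ((kingSet A m).ncard + 1) ≤ (kingSet A (m + 1)).ncard := by
  by_cases huniv : kingSet A m = Set.univ
  · have : kingSet A (m + 1) = Set.univ :=
      Set.eq_univ_of_univ_subset (huniv ▸ kingSet_mono m.le_succ)
    rw [this, Set.ncard_univ]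
    exact min_le_left _ _
  · obtain ⟨v, hv⟩ := (Set.ne_univ_iff_exists_notMem _).mp huniv
    obtain ⟨z₀, hz₀⟩ := hne
    obtain ⟨w, hw, z, hz, hwz⟩ := hstr.exists_adj_into hv hz₀
    calc min (Nat.card V) ((kingSet A m).ncard + 1)
        ≤ (insert w (kingSet A m)).ncard := by rw [Set.ncard_insert_of_notMem hw]; omega
      _ ≤ (kingSet A (m + 1)).ncard :=
        Set.ncard_le_ncard (Set.insert_subset (IsKKing.of_adj hwz hz) (kingSet_mono m.le_succ))

end Kings

section Semicomplete

variable {V : Type u} {A : V → V → Prop}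

def IsTwoKingOn (A : V → V → Prop) (s : Set V) (k : V) : Prop :=
  k ∈ s ∧ ∀ y ∈ s, k = y ∨ A k y ∨ ∃ z ∈ s, A k z ∧ A z y

theorem IsTwoKingOn.isKKing_two {k : V} (hk : IsTwoKingOn A Set.univ k) : IsKKing A 2 k := by
  intro y
  rcases hk.2 y trivial with rfl | hky | ⟨z, -, hkz, hzy⟩
  · exact ReachIn.refl 2 k
  · exact ReachIn.of_adj hky
  · exact ReachIn.cons hkz (ReachIn.of_adj hzy)

variable (hsc : Semicomplete A)
include hsc

/-- Every vertex `y` of `s` that does not dominate `b` is dominated by `b`, hence reached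
through `b`. -/
theorem IsTwoKingOn.of_inNeighbours {s : Set V} {b k : V} (hb : b ∈ s)
    (hk : IsTwoKingOn A {y ∈ s | A y b} k) : IsTwoKingOn A s k := by
  refine ⟨hk.1.1, fun y hy => ?_⟩
  by_cases hyb : A y b
  · rcases hk.2 y ⟨hy, hyb⟩ with h | h | ⟨z, hz, hkz, hzy⟩
    · exact Or.inl h
    · exact Or.inr (Or.inl h)
    · exact Or.inr (Or.inr ⟨z, hz.1, hkz, hzy⟩)
  · by_cases hyb' : y = b
    · exact Or.inr (Or.inl (hyb' ▸ hk.1.2))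
    · exact Or.inr (Or.inr ⟨b, hb, hk.1.2, (hsc b y (Ne.symm hyb')).resolve_right hyb⟩)

theorem exists_isTwoKingOn (hl : Loopless A) [Finite V] {s : Set V} (hs : s.Nonempty) :
    ∃ k, IsTwoKingOn A s k := by
  induction s using WellFoundedLT.induction with
  | _ s ih =>
    obtain ⟨x, hx⟩ := hs
    by_cases hin : ∃ y ∈ s, A y x
    · obtain ⟨y, hy, hyx⟩ := hin
      have hlt : {y ∈ s | A y x} < s :=
        Set.sep_subset _ _ |>.lt_of_ne fun h => hl x (h.symm ▸ hx : x ∈ {y ∈ s | A y x}).2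
      obtain ⟨k, hk⟩ := ih _ hlt ⟨y, hy, hyx⟩
      exact ⟨k, hk.of_inNeighbours hsc hx⟩
    · push Not at hin
      refine ⟨x, hx, fun y hy => ?_⟩
      by_cases hxy : x = y
      · exact Or.inl hxy
      · exact Or.inr (Or.inl ((hsc x y hxy).resolve_right (hin y hy)))

end Semicomplete

section StrongSemicomplete

variable {V : Type u} {A : V → V → Prop} [Finite V]
  (hsc : Semicomplete A) (hl : Loopless A)
include hsc hl

theorem exists_isKKing_three_of_not_isKKing_two {s : Set V} {x : V} (hx : x ∈ s)
    (hreach : ∀ y ∉ s, ReachIn A 2 x y) (hx2 : ¬ IsKKing A 2 x) :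
    ∃ k ∈ s, k ≠ x ∧ IsKKing A 3 k := by
  have hin : ∃ y ∈ s, A y x := by
    by_contra! hin
    refine hx2 fun y => ?_
    by_cases hy : y ∈ s
    · by_cases hxy : x = y
      · exact hxy ▸ ReachIn.refl 2 x
      · exact ReachIn.of_adj ((hsc x y hxy).resolve_right (hin y hy))
    · exact hreach y hy
  obtain ⟨k, hk⟩ := exists_isTwoKingOn hsc hl hin
  have hks := hk.of_inNeighbours hsc hx
  refine ⟨k, hks.1, fun h => hl x (h ▸ hk.1.2), fun y => ?_⟩
  by_cases hy : y ∈ s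
  · rcases hks.2 y hy with rfl | hky | ⟨z, -, hkz, hzy⟩
    · exact ReachIn.refl 3 k
    · exact ReachIn.of_adj hky
    · exact ReachIn.cons hkz (ReachIn.of_adj hzy)
  · exact ReachIn.cons hk.1.2 (hreach y hy)

variable (hstr : IsStrong A)
include hstr

theorem IsStrong.exists_adj_isKKing_two (hV : 1 < Nat.card V) (v : V) :
    ∃ k, A k v ∧ IsKKing A 2 k := by
  obtain ⟨w, hwv⟩ := hstr.exists_adj_to hV v
  obtain ⟨k, hk⟩ :=
    exists_isTwoKingOn hsc hl (s := {y ∈ Set.univ | A y v}) ⟨w, trivial, hwv⟩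
  exact ⟨k, hk.1.2, (hk.of_inNeighbours hsc (Set.mem_univ v)).isKKing_two⟩

/-- The out-neighbourhood of `i` is left by some arc `w → q`; then `q = i` or `q → i`. -/
theorem IsStrong.exists_adj_reachIn_two (hV : 1 < Nat.card V) (i : V) :
    ∃ z, A i z ∧ ReachIn A 2 z i := by
  have := Finite.one_lt_card_iff_nontrivial.mp hV
  obtain ⟨u, hu⟩ := exists_ne i
  obtain ⟨i', hi', z, -, hiz⟩ := hstr.exists_adj_into (s := {i}ᶜ) (not_not.mpr rfl) hu
  obtain rfl : i = i' := by simpa [eq_comm] using hi'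
  obtain ⟨w, hw, q, hq, hwq⟩ :=
    hstr.exists_adj_into (s := {y | A i y}ᶜ) (not_not.mpr hiz) (hl i)
  refine ⟨w, Set.notMem_compl_iff.mp hw, ?_⟩
  by_cases hqi : q = i
  · exact ReachIn.of_adj (hqi ▸ hwq)
  · exact ReachIn.cons hwq (ReachIn.of_adj ((hsc i q (Ne.symm hqi)).resolve_left hq))

theorem IsStrong.two_le_ncard_kingSet_two (hV : 1 < Nat.card V) : 2 ≤ (kingSet A 2).ncard := by
  have := Finite.one_lt_card_iff_nontrivial.mp hV
  obtain ⟨a, -, ha⟩ := hstr.exists_adj_isKKing_two hsc hl hV (Classical.arbitrary V)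
  obtain ⟨b, hba, hb⟩ := hstr.exists_adj_isKKing_two hsc hl hV a
  have hab : a ≠ b := fun h => hl a (h ▸ hba)
  calc 2 = ({a, b} : Set V).ncard := (Set.ncard_pair hab).symm
    _ ≤ (kingSet A 2).ncard :=
      Set.ncard_le_ncard (Set.insert_subset ha (Set.singleton_subset_iff.mpr hb))

theorem IsStrong.adj_of_kingSet_two_eq_pair (hV : 1 < Nat.card V) {a b : V}
    (hK2 : kingSet A 2 = {a, b}) : A a b := by
  obtain ⟨c, hcb, hc⟩ := hstr.exists_adj_isKKing_two hsc hl hV b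
  rcases (hK2 ▸ hc : c ∈ ({a, b} : Set V)) with rfl | rfl
  · exact hcb
  · exact absurd hcb (hl c)

theorem IsStrong.four_le_ncard_kingSet_three_of_eq_pair (hV : 1 < Nat.card V) {a b x : V}
    (hK2 : kingSet A 2 = {a, b}) (hxa : A x a) (hx : x ∉ kingSet A 2) :
    4 ≤ (kingSet A 3).ncard := by
  have hab := hstr.adj_of_kingSet_two_eq_pair hsc hl hV hK2
  have ha : a ∈ kingSet A 2 := hK2 ▸ Set.mem_insert a {b}
  have hreach : ∀ y ∉ (kingSet A 2)ᶜ, ReachIn A 2 x y := by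
    intro y hy
    rw [Set.notMem_compl_iff, hK2] at hy
    rcases hy with rfl | rfl
    · exact ReachIn.of_adj hxa
    · exact ReachIn.cons hxa (ReachIn.of_adj hab)
  obtain ⟨k, hk, hkx, hk3⟩ := exists_isKKing_three_of_not_isKKing_two hsc hl hx hreach hx
  have hK3 : insert k (insert x (kingSet A 2)) ⊆ kingSet A 3 :=
    Set.insert_subset hk3 <|
      Set.insert_subset (IsKKing.of_adj hxa ha) (kingSet_mono (by norm_num))
  have hab' : a ≠ b := fun h => hl a (h ▸ hab)
  calc 4 = (insert k (insert x (kingSet A 2))).ncard := by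
        rw [Set.ncard_insert_of_notMem (by rintro (h | h) <;> contradiction),
          Set.ncard_insert_of_notMem hx, hK2, Set.ncard_pair hab']
    _ ≤ (kingSet A 3).ncard := Set.ncard_le_ncard hK3

theorem IsStrong.min_four_le_ncard_kingSet_three (hV : 1 < Nat.card V) :
    min 4 (Nat.card V) ≤ (kingSet A 3).ncard := by
  have h2 := hstr.two_le_ncard_kingSet_two hsc hl hV
  have hgrow : min (Nat.card V) ((kingSet A 2).ncard + 1) ≤ (kingSet A 3).ncard :=
    min_card_le_ncard_kingSet_succ hstr (Set.nonempty_of_ncard_ne_zero (by omega))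
  obtain h2 | h3 := h2.eq_or_lt
  · obtain ⟨a, b, hab, hK2⟩ := Set.ncard_eq_two.mp h2.symm
    by_cases hV3 : Nat.card V ≤ 3
    · omega
    obtain ⟨v, hv⟩ : (kingSet A 2)ᶜ.Nonempty :=
      Set.nonempty_compl.mpr fun h => by rw [h, Set.ncard_univ] at h2; omega
    obtain ⟨x, hx, z, hz, hxz⟩ := hstr.exists_adj_into hv (hK2 ▸ Set.mem_insert a {b})
    rw [hK2] at hz
    refine le_trans (min_le_left _ _) ?_
    rcases hz with rfl | rfl
    · exact hstr.four_le_ncard_kingSet_three_of_eq_pair hsc hl hV hK2 hxz hx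
    · rw [Set.pair_comm] at hK2
      exact hstr.four_le_ncard_kingSet_three_of_eq_pair hsc hl hV hK2 hxz hx
  · omega

theorem IsStrong.min_five_le_ncard_kingSet_four (hV : 1 < Nat.card V) :
    min 5 (Nat.card V) ≤ (kingSet A 4).ncard := by
  have h3 := hstr.min_four_le_ncard_kingSet_three hsc hl hV
  have : min (Nat.card V) ((kingSet A 3).ncard + 1) ≤ (kingSet A 4).ncard :=
    min_card_le_ncard_kingSet_succ hstr (Set.nonempty_of_ncard_ne_zero (by omega))
  omega

end StrongSemicomplete

section Composition

variable {t : ℕ} {T : Fin t → Fin t → Prop} {V : Fin t → Type u}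
  {H : ∀ i, V i → V i → Prop} [∀ i, Nonempty (V i)]

theorem IsStrong.of_comp (h : IsStrong (Comp T V H)) : IsStrong T := fun i j => by
  refine Relation.ReflTransGen.lift' Sigma.fst (fun p q hpq => ?_) _ _
    (h ⟨i, Classical.arbitrary _⟩ ⟨j, Classical.arbitrary _⟩)
  show Relation.ReflTransGen T p.1 q.1
  rcases hpq with hpq | ⟨hpq, -⟩
  · exact .single hpq
  · exact hpq ▸ .refl

theorem reachIn_comp_of_ne : ∀ {n : ℕ} {i j : Fin t}, i ≠ j → ReachIn T n i j →
    ∀ (x : V i) (y : V j), ReachIn (Comp T V H) n ⟨i, x⟩ ⟨j, y⟩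
  | 0, _, _, hij, h, _, _ => absurd h hij
  | _ + 1, _, j, hij, h, _, y => by
    rcases h with h | ⟨k, hik, hkj⟩
    · exact absurd h hij
    by_cases hkj' : k = j
    · subst hkj'
      exact ReachIn.of_adj (Or.inl hik)
    · exact ReachIn.cons (Or.inl hik) (reachIn_comp_of_ne hkj' hkj (Classical.arbitrary _) y)

/-- Inside its own part, `⟨i, x⟩` reaches `⟨i, y⟩` along the closed walk through `i`. -/
theorem isKKing_comp_mk (hl : Loopless T) {m : ℕ} (hm : 3 ≤ m) {i : Fin t}
    (hk : IsKKing T m i) (hcyc : ∃ z, T i z ∧ ReachIn T 2 z i) (x : V i) :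
    IsKKing (Comp T V H) m ⟨i, x⟩ := by
  rintro ⟨j, y⟩
  by_cases hij : i = j
  · subst hij
    obtain ⟨z, hiz, hzi⟩ := hcyc
    have hzi' : z ≠ i := fun h => hl i (h ▸ hiz)
    have hiz' : Comp T V H ⟨i, x⟩ ⟨z, Classical.arbitrary _⟩ := Or.inl hiz
    exact (ReachIn.cons hiz' (reachIn_comp_of_ne hzi' hzi _ y)).mono hm
  · exact reachIn_comp_of_ne hij (hk j) x y

theorem preimage_kingSet_subset_kingSet_comp (hsc : Semicomplete T) (hl : Loopless T)
    (hstr : IsStrong T) (ht : 1 < t) {m : ℕ} (hm : 3 ≤ m) :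
    Sigma.fst ⁻¹' kingSet T m ⊆ kingSet (Comp T V H) m := fun ⟨i, x⟩ hi =>
  isKKing_comp_mk hl hm hi (hstr.exists_adj_reachIn_two hsc hl (by rwa [Nat.card_fin]) i) x

end Composition

theorem stmt8_general {t : ℕ} (ht : 2 ≤ t) (V : Fin t → Type u) [∀ i, Fintype (V i)]
    [∀ i, Nonempty (V i)] (T : Fin t → Fin t → Prop) (H : ∀ i, V i → V i → Prop)
    (hTl : Loopless T) (hsc : Semicomplete T)
    (hstrong : IsStrong (Comp T V H))
    (hcard : 6 ≤ Fintype.card (Σ i, V i)) :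
    5 ≤ {x : Σ i, V i | IsKKing (Comp T V H) 4 x}.ncard ∧
      ((¬ ∃ x : Σ i, V i, IsKKing (Comp T V H) 3 x) →
        8 ≤ {x : Σ i, V i | IsKKing (Comp T V H) 4 x}.ncard) := by
  have hT : IsStrong T := hstrong.of_comp
  have hlift : ∀ m, 3 ≤ m → Sigma.fst ⁻¹' kingSet T m ⊆ kingSet (Comp T V H) m :=
    fun m hm => preimage_kingSet_subset_kingSet_comp hsc hTl hT ht hm
  have ht' : 1 < Nat.card (Fin t) := by rwa [Nat.card_fin]
  obtain ⟨a, -, ha⟩ := hT.exists_adj_isKKing_two hsc hTl ht' ⟨0, by omega⟩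
  have h3 : IsKKing (Comp T V H) 3 ⟨a, Classical.arbitrary _⟩ :=
    hlift 3 le_rfl (ha.mono (by norm_num))
  refine ⟨?_, fun hno => (hno ⟨_, h3⟩).elim⟩
  change 5 ≤ (kingSet (Comp T V H) 4).ncard
  have h5 := hT.min_five_le_ncard_kingSet_four hsc hTl ht'
  by_cases huniv : kingSet T 4 = Set.univ
  · have hQ : kingSet (Comp T V H) 4 = Set.univ :=
      Set.eq_univ_of_univ_subset (by simpa [huniv] using hlift 4 (by norm_num))
    rw [hQ, Set.ncard_univ, Nat.card_eq_fintype_card]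
    omega
  · have hlt := Set.ncard_lt_card huniv
    calc 5 ≤ (kingSet T 4).ncard := by omega
      _ = (Sigma.fst '' (Sigma.fst ⁻¹' kingSet T 4)).ncard := by
        rw [Set.image_preimage_eq _ fun i => ⟨⟨i, Classical.arbitrary _⟩, rfl⟩]
      _ ≤ (Sigma.fst ⁻¹' kingSet T 4).ncard := Set.ncard_image_le
      _ ≤ (kingSet (Comp T V H) 4).ncard := Set.ncard_le_ncard (hlift 4 (by norm_num))

/-- Every strong semicomplete composition with at least six vertices has at
least five 4-kings; if in addition it has no 3-king, then it has at least eight 4-kings. -/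
theorem stmt8 {t : ℕ} (ht : 2 ≤ t) (V : Fin t → Type u) [∀ i, Fintype (V i)]
    [∀ i, Nonempty (V i)] (T : Fin t → Fin t → Prop) (H : ∀ i, V i → V i → Prop)
    (hTl : Loopless T) (hHl : ∀ i, Loopless (H i)) (hsc : Semicomplete T)
    (hstrong : IsStrong (Comp T V H))
    (hcard : 6 ≤ Fintype.card (Σ i, V i)) :
    5 ≤ {x : Σ i, V i | IsKKing (Comp T V H) 4 x}.ncard ∧
      ((¬ ∃ x : Σ i, V i, IsKKing (Comp T V H) 3 x) →
        8 ≤ {x : Σ i, V i | IsKKing (Comp T V H) 4 x}.ncard) :=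
  stmt8_general ht V T H hTl hsc hstrong hcard
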